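/- Let Φ be a 3-CNF formula with clauses C_1,…,C_n and variables A_1,…,A_m, and let P^Φ be the associated program. If E is an elementary set for P^Φ containing both c_0 and c_{n+1}, then for each i ∈ [1, m], at least one of a_i and na_i belongs to E. -/

import Mathlib

structure Rule (α : Type) where
  B : Finset α
  F : Finset α
  H : Finset α

variable {α : Type}

/-- Z is outbound in Y for program P. -/
def Outbound [DecidableEq α] (P : Set (Rule α)) (Y Z : Finset α) : Prop :=
  ∃ r ∈ P, (r.H ∩ Z).Nonempty ∧ (r.B ∩ (Y \ Z)).Nonempty ∧
    r.B ∩ Z = ∅ ∧ r.H ∩ (Y \ Z) = ∅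

/-- Y is an elementary set for P. -/
def Elementary [DecidableEq α] (P : Set (Rule α)) (Y : Finset α) : Prop :=
  Y.Nonempty ∧ ∀ Z : Finset α, Z ⊂ Y → Z.Nonempty → Outbound P Y Z

/-- X is a disjunctive set for P. -/
def DisjSet [DecidableEq α] (P : Set (Rule α)) (X : Finset α) : Prop :=
  ∃ r ∈ P, 1 < (r.H ∩ X).card

/-- The projection P_X of P on a set X of atoms. -/
def proj [DecidableEq α] (P : Set (Rule α)) (X : Finset α) : Set (Rule α) :=
  {r' | ∃ r ∈ P, (r.B ∩ X).Nonempty ∧ (r.H ∩ X).Nonempty ∧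
        r' = ⟨r.B ∩ X, ∅, r.H ∩ X⟩}

/-- P is head-elementary-set-free. -/
def HEF [DecidableEq α] (P : Set (Rule α)) : Prop :=
  ∀ r ∈ P, ∀ E : Finset α, Elementary P E → (E ∩ r.H).card ≤ 1

/-- Atoms of the program `P^Φ`. -/
inductive Atom : Type
  | phi : Atom
  | a : ℕ → Atom
  | na : ℕ → Atom
  | c : ℕ → Atom
deriving DecidableEq

/-- The atom opposite to a literal (variable index, sign). -/
def oppAtom : ℕ × Bool → Atom
  | (v, true) => Atom.na v
  | (v, false) => Atom.a v

/-- The atom corresponding to a literal. -/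
def litAtom : ℕ × Bool → Atom
  | (v, true) => Atom.a v
  | (v, false) => Atom.na v

/-- NV(c_i): opposites of the atoms of the literals of clause C_i. -/
def NV (C : ℕ → Fin 3 → ℕ × Bool) (i : ℕ) : Finset Atom :=
  {oppAtom (C i 0), oppAtom (C i 1), oppAtom (C i 2)}

/-- The program `P^Φ` associated with a 3-CNF with m variables `A_1,…,A_m`
and n clauses `C_1,…,C_n`, the clauses given by `C`. -/
def PPhi (m n : ℕ) (C : ℕ → Fin 3 → ℕ × Bool) : Set (Rule Atom) :=
  ({⟨{Atom.phi}, ∅, {Atom.c 0, Atom.c (n+1)}⟩,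
    ⟨{Atom.c 0}, ∅, {Atom.c 1}⟩,
    ⟨{Atom.c (n+1), Atom.na 1}, ∅, {Atom.a 1}⟩,
    ⟨{Atom.c (n+1), Atom.a 1}, ∅, {Atom.na 1}⟩,
    ⟨{Atom.a m, Atom.na m}, ∅, {Atom.c 0}⟩} : Set (Rule Atom)) ∪
  {r | ∃ i ∈ Finset.Icc 1 n, ∃ α ∈ NV C i,
        r = ⟨{Atom.c i, α}, ∅, {Atom.c (i+1)}⟩} ∪
  {r | ∃ i ∈ Finset.Icc 1 (m-1),
        r = ⟨{Atom.a i, Atom.na (i+1)}, ∅, {Atom.a (i+1)}⟩ ∨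
        r = ⟨{Atom.a i, Atom.a (i+1)}, ∅, {Atom.na (i+1)}⟩ ∨
        r = ⟨{Atom.na i, Atom.na (i+1)}, ∅, {Atom.a (i+1)}⟩ ∨
        r = ⟨{Atom.na i, Atom.a (i+1)}, ∅, {Atom.na (i+1)}⟩}

/-- All variable indices mentioned by clauses 1..n lie in [1,m]. -/
def ValidCNF (m n : ℕ) (C : ℕ → Fin 3 → ℕ × Bool) : Prop :=
  ∀ i ∈ Finset.Icc 1 n, ∀ j : Fin 3, (C i j).1 ∈ Finset.Icc 1 m

/-- Truth assignment X satisfies the 3-CNF. -/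
def Sat (n : ℕ) (C : ℕ → Fin 3 → ℕ × Bool) (X : ℕ → Bool) : Prop :=
  ∀ i ∈ Finset.Icc 1 n, ∃ j : Fin 3, X (C i j).1 = (C i j).2

/-!
Suppose neither `a i` nor `na i` lies in `E`. Take `Z` to be `c 0` together with the variable
atoms of `E` of level above `i`. It is a nonempty proper subset of `E` (it misses `c (n+1)`),
yet no rule makes it outbound: the only rule with `c 0` in its head but no other atom of `E`
there has body `{a m, na m}`, which lies in `Z` or misses `E`; and a chain rule deriving an atom
of level `k + 1 > i` needs an atom of level `k` from `E \ Z`, forcing `k = i`, but `E` has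
no atom of level `i`.
-/

namespace Atom

def level : Atom → ℕ
  | a j => j
  | na j => j
  | _ => 0

end Atom

open Atom

theorem PPhi.not_outbound_of_gap {m n i : ℕ} {C : ℕ → Fin 3 → ℕ × Bool} {E : Finset Atom}
    (hi : 1 ≤ i) (him : i ≤ m) (h1 : c (n + 1) ∈ E) (ha : a i ∉ E) (hna : na i ∉ E)
    {Z : Finset Atom} (hZ : ∀ x, x ∈ Z ↔ x ∈ E ∧ (x = c 0 ∨ i < x.level)) :
    ¬ Outbound (PPhi m n C) E Z := by
  rintro ⟨r, hr, hH, hB, hBZ, hHE⟩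
  simp only [PPhi, Set.mem_union, Set.mem_insert_iff, Set.mem_singleton_iff,
    Set.mem_ofPred_eq] at hr
  rcases hr with ((rfl | rfl | rfl | rfl | rfl) | ⟨_, _, _, _, rfl⟩) |
    ⟨k, _, (rfl | rfl | rfl | rfl)⟩ <;>
  simp [Finset.Nonempty, Finset.eq_empty_iff_forall_notMem, hZ, level] at hH hB hBZ hHE <;>
  grind

theorem stmt10_general (m n : ℕ)
    (C : ℕ → Fin 3 → ℕ × Bool)
    (E : Finset Atom) (hE : Elementary (PPhi m n C) E)
    (h0 : Atom.c 0 ∈ E) (h1 : Atom.c (n+1) ∈ E) :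
    ∀ i ∈ Finset.Icc 1 m, Atom.a i ∈ E ∨ Atom.na i ∈ E := by
  intro i hi
  rw [Finset.mem_Icc] at hi
  by_contra! hgap
  set Z := E.filter fun x => x = c 0 ∨ i < x.level
  have hZE : Z ⊂ E := Finset.filter_ssubset.2 ⟨c (n + 1), h1, by simp [level]⟩
  have hZ : Z.Nonempty := ⟨c 0, Finset.mem_filter.2 ⟨h0, .inl rfl⟩⟩
  exact PPhi.not_outbound_of_gap hi.1 hi.2 h1 hgap.1 hgap.2 (fun _ => Finset.mem_filter)
    (hE.2 Z hZE hZ)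

theorem stmt10 (m n : ℕ) (hm : 1 ≤ m) (hn : 1 ≤ n)
    (C : ℕ → Fin 3 → ℕ × Bool) (hC : ValidCNF m n C)
    (E : Finset Atom) (hE : Elementary (PPhi m n C) E)
    (h0 : Atom.c 0 ∈ E) (h1 : Atom.c (n+1) ∈ E) :
    ∀ i ∈ Finset.Icc 1 m, Atom.a i ∈ E ∨ Atom.na i ∈ E :=
  stmt10_general m n C E hE h0 h1
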